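/- arXiv:2109.06368 — 4 statements merged into one kernel-verified Lean document; each statement's English description precedes it below -/
import Mathlib

section
/- Let m ≥ 2 be an integer, l ≥ 0, and let h : ℝ → ℝ be (m−1)-times differentiable with h^{(m−1)} Lipschitz with constant l on ℝ. Let K : ℝ → ℝ be an order-m kernel. Then for every u ∈ ℝ and every b with 0 < b ≤ 1: |∫ K(s)·h(u + b·s) ds − h(u)| ≤ (l·∫|s|^m·|K(s)| ds / (m−1)!)·b^m. -/
open MeasureTheory Finset intervalIntegral

lemma taylor_lip (L : NNReal) : ∀ (n : ℕ) (f : ℝ → ℝ),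
    (∀ k < n, Differentiable ℝ (iteratedDeriv k f)) →
    LipschitzWith L (iteratedDeriv n f) → ∀ a x : ℝ,
    |f x - ∑ k ∈ range (n + 1), iteratedDeriv k f a * (x - a) ^ k / k.factorial| ≤
      (L : ℝ) * |x - a| ^ (n + 1) / n.factorial := by
  intro n
  induction n with
  | zero =>
    intro f _ hlip a x
    simpa [Real.dist_eq] using hlip.dist_le_mul x a
  | succ n IH =>
    intro f hd hlip a x
    set g := deriv f with hg
    have hf0 : Differentiable ℝ f := by
      simpa [iteratedDeriv_zero] using hd 0 (Nat.succ_pos n)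
    have hgiter : ∀ k, iteratedDeriv k g = iteratedDeriv (k + 1) f := by
      intro k; rw [iteratedDeriv_succ']
    have hgd : ∀ k < n, Differentiable ℝ (iteratedDeriv k g) := by
      intro k hk; rw [hgiter]; exact hd (k + 1) (by omega)
    have hglip : LipschitzWith L (iteratedDeriv n g) := by
      rw [hgiter]; exact hlip
    have Hg := IH g hgd hglip a
    set Q : ℝ → ℝ := fun t => ∑ k ∈ range (n + 1), iteratedDeriv k g a * (t - a) ^ k / k.factorial with hQ
    set P : ℝ → ℝ := fun t => ∑ k ∈ range (n + 2), iteratedDeriv k f a * (t - a) ^ k / k.factorial with hP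
    have hgcont : Continuous g := by
      rcases Nat.eq_zero_or_pos n with h0 | h1
      · have := hglip.continuous; rwa [h0, iteratedDeriv_zero] at this
      · have := (hgd 0 h1).continuous; rwa [iteratedDeriv_zero] at this
    have hQcont : Continuous Q := by
      apply continuous_finset_sum; intro k _; fun_prop
    have hPderiv : ∀ t : ℝ, HasDerivAt P (Q t) t := by
      intro t
      have h1 : HasDerivAt P (∑ k ∈ range (n + 2),
          iteratedDeriv k f a * (k * (t - a) ^ (k - 1)) / k.factorial) t := by
        apply HasDerivAt.fun_sum
        intro k _
        have : HasDerivAt (fun t : ℝ => (t - a) ^ k) (k * (t - a) ^ (k - 1)) t := by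
          simpa using ((hasDerivAt_id t).sub_const a).fun_pow k
        simpa [mul_div_assoc] using (this.const_mul (iteratedDeriv k f a)).div_const _
      convert h1 using 1
      rw [hQ]
      rw [Finset.sum_range_succ' (fun k => iteratedDeriv k f a * (↑k * (t - a) ^ (k - 1)) / ↑(Nat.factorial k)) (n+1)]
      simp only [Nat.cast_zero, zero_mul, mul_zero, Nat.factorial_zero, Nat.cast_one, zero_div, add_zero]
      apply Finset.sum_congr rfl
      intro k _
      rw [hgiter]
      have : ((k+1).factorial : ℝ) = (k+1) * k.factorial := by
        rw [Nat.factorial_succ]; push_cast; ring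
      rw [this]
      have hk1 : ((k:ℝ) + 1) ≠ 0 := by positivity
      have hkf : (k.factorial : ℝ) ≠ 0 := by positivity
      simp only [Nat.add_sub_cancel]
      field_simp
      push_cast; ring
    set F : ℝ → ℝ := fun t => f t - P t with hF
    have hFderiv : ∀ t : ℝ, HasDerivAt F (g t - Q t) t :=
      fun t => (hf0 t).hasDerivAt.sub (hPderiv t)
    have hFa : F a = 0 := by
      simp only [hF, hP]
      rw [Finset.sum_eq_single 0]
      · simp [iteratedDeriv_zero]
      · intro k _ hk; simp [sub_self, zero_pow hk]
      · simp
    have hFx : F x = ∫ t in a..x, (g t - Q t) := by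
      rw [integral_eq_sub_of_hasDerivAt (fun t _ => hFderiv t)
        ((hgcont.sub hQcont).intervalIntegrable a x), hFa, sub_zero]
    have key : ∀ t : ℝ, ‖g t - Q t‖ ≤ ((L : ℝ) / n.factorial) * |t - a| ^ (n + 1) := by
      intro t
      have := Hg t
      rw [Real.norm_eq_abs]
      calc |g t - Q t| ≤ (L : ℝ) * |t - a| ^ (n + 1) / n.factorial := this
        _ = ((L : ℝ) / n.factorial) * |t - a| ^ (n + 1) := by ring
    have hbound : |F x| ≤ ((L : ℝ) / n.factorial) * (|x - a| ^ (n + 2) / (n + 2)) := by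
      rw [hFx]
      calc ‖∫ t in a..x, (g t - Q t)‖ ≤ ∫ t in Set.uIoc a x, ‖g t - Q t‖ :=
            norm_integral_le_integral_norm_uIoc
        _ ≤ ∫ t in Set.uIoc a x, ((L : ℝ) / n.factorial) * |t - a| ^ (n + 1) := by
            apply setIntegral_mono_on
            · exact ((hgcont.sub hQcont).norm.integrableOn_uIcc).mono_set Set.uIoc_subset_uIcc
            · exact (((continuous_const.mul (((continuous_id.sub continuous_const).abs).pow _))).integrableOn_uIcc).mono_set Set.uIoc_subset_uIcc
            · exact measurableSet_uIoc
            · intro t _; exact key t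
        _ = ((L : ℝ) / n.factorial) * (|x - a| ^ (n + 2) / (n + 2)) := by
            rw [MeasureTheory.integral_const_mul, integral_pow_abs_sub_uIoc]
            push_cast; ring
    calc |F x| ≤ ((L : ℝ) / n.factorial) * (|x - a| ^ (n + 2) / (n + 2)) := hbound
      _ ≤ (L : ℝ) * |x - a| ^ (n + 2) / (n + 1).factorial := by
          have he : ((L : ℝ) / n.factorial) * (|x - a| ^ (n + 2) / (n + 2)) =
              (L : ℝ) * |x - a| ^ (n + 2) / ((n + 2) * n.factorial) := by
            rw [div_mul_div_comm, mul_comm ((n.factorial : ℝ))]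
          rw [he, Nat.factorial_succ]
          push_cast
          apply div_le_div_of_nonneg_left (by positivity) (by positivity)
          have h1 : (0:ℝ) < n.factorial := by positivity
          nlinarith
      _ = (L : ℝ) * |x - a| ^ (n + 1 + 1) / (n + 1).factorial := by norm_num

/-- Lemma A.1 of the paper: kernel bias bound. If `h` is `(m-1)`-times
differentiable with `l`-Lipschitz `(m-1)`-st derivative, and `K` is an order-`m` kernel,
then for every `u` and every bandwidth `0 < b ≤ 1`,
`|∫ K(s) h(u + b s) ds - h(u)| ≤ (l ∫ |s|^m |K(s)| ds / (m-1)!) b^m`. -/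
theorem kernel_bias_bound
    (m : ℕ) (hm : 2 ≤ m) (l : ℝ) (hl : 0 ≤ l) (h K : ℝ → ℝ)
    (hdiff : ∀ k < m - 1, Differentiable ℝ (iteratedDeriv k h))
    (hlip : LipschitzWith l.toNNReal (iteratedDeriv (m - 1) h))
    (hKmeas : Measurable K) (hKint : Integrable K)
    (hK1 : (∫ s, K s) = 1)
    (hKmomInt : ∀ j : ℕ, 1 ≤ j → j ≤ m - 1 → Integrable (fun s => s ^ j * K s))
    (hKmom : ∀ j : ℕ, 1 ≤ j → j ≤ m - 1 → (∫ s, s ^ j * K s) = 0)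
    (hKm : Integrable (fun s => |s| ^ m * |K s|)) :
    ∀ u b : ℝ, 0 < b → b ≤ 1 →
      |(∫ s, K s * h (u + b * s)) - h u| ≤
        (l * ∫ s, |s| ^ m * |K s|) / (m - 1).factorial * b ^ m := by
  obtain ⟨n, rfl⟩ : ∃ n, m = n + 1 := ⟨m - 1, by omega⟩
  have hn : 1 ≤ n := by omega
  simp only [Nat.add_sub_cancel] at hdiff hlip hKmomInt hKmom ⊢
  intro u b hb hb1
  have hlcoe : (l.toNNReal : ℝ) = l := Real.coe_toNNReal l hl
  have htaylor := taylor_lip l.toNNReal n h hdiff hlip u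
  set T : ℝ → ℝ := fun s => ∑ k ∈ Finset.range (n + 1),
    iteratedDeriv k h u * (b * s) ^ k / k.factorial with hT
  set R : ℝ → ℝ := fun s => h (u + b * s) - T s with hRdef
  set c : ℝ := l * b ^ (n + 1) / n.factorial with hc
  have hbabs : |b| = b := abs_of_pos hb
  have hR : ∀ s, |R s| ≤ c * |s| ^ (n + 1) := by
    intro s
    have := htaylor (u + b * s)
    simp only [add_sub_cancel_left] at this
    calc |R s| ≤ (l.toNNReal : ℝ) * |b * s| ^ (n + 1) / n.factorial := this
      _ = c * |s| ^ (n + 1) := by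
          rw [hlcoe, abs_mul, hbabs, mul_pow, hc]; ring
  have hcont_h : Continuous h := by
    have := (hdiff 0 (by omega)).continuous; rwa [iteratedDeriv_zero] at this
  have hcont_arg : Continuous fun s : ℝ => u + b * s := by fun_prop
  have hTcont : Continuous T := by
    apply continuous_finset_sum; intro k _; fun_prop
  have hmom : ∀ k ≤ n, Integrable (fun s => s ^ k * K s) := by
    intro k hk
    rcases Nat.eq_zero_or_pos k with rfl | h1
    · simpa using hKint
    · exact hKmomInt k h1 hk
  have hKT : Integrable (fun s => K s * T s) := by
    have : (fun s => K s * T s) = fun s => ∑ k ∈ Finset.range (n + 1),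
        (iteratedDeriv k h u * b ^ k / k.factorial) * (s ^ k * K s) := by
      funext s
      rw [hT, Finset.mul_sum]
      apply Finset.sum_congr rfl
      intro k _
      rw [mul_pow]; ring
    rw [this]
    exact integrable_finset_sum _ fun k hk =>
      ((hmom k (Nat.lt_succ_iff.mp (Finset.mem_range.mp hk))).const_mul _)
  have hc0 : 0 ≤ c := by positivity
  have hpt : ∀ s, ‖K s * R s‖ ≤ c * (|s| ^ (n + 1) * |K s|) := by
    intro s
    rw [Real.norm_eq_abs, abs_mul]
    calc |K s| * |R s| ≤ |K s| * (c * |s| ^ (n + 1)) :=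
          mul_le_mul_of_nonneg_left (hR s) (abs_nonneg _)
      _ = c * (|s| ^ (n + 1) * |K s|) := by ring
  have hKRmeas : AEStronglyMeasurable (fun s => K s * R s) volume := by
    have : Measurable fun s => K s * R s :=
      hKmeas.mul (((hcont_h.comp hcont_arg).sub hTcont).measurable)
    exact this.aestronglyMeasurable
  have hKmc : Integrable (fun s => c * (|s| ^ (n + 1) * |K s|)) := hKm.const_mul c
  have hKR : Integrable (fun s => K s * R s) :=
    Integrable.mono' hKmc hKRmeas (Filter.Eventually.of_forall hpt)
  have hsplit : (∫ s, K s * h (u + b * s)) = (∫ s, K s * T s) + ∫ s, K s * R s := by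
    rw [← integral_add hKT hKR]
    apply MeasureTheory.integral_congr_ae
    filter_upwards with s
    rw [hRdef]; ring
  have hTint : (∫ s, K s * T s) = h u := by
    have heq : (fun s => K s * T s) = fun s => ∑ k ∈ Finset.range (n + 1),
        (iteratedDeriv k h u * b ^ k / k.factorial) * (s ^ k * K s) := by
      funext s
      rw [hT, Finset.mul_sum]
      apply Finset.sum_congr rfl
      intro k _
      rw [mul_pow]; ring
    rw [heq, integral_finset_sum _ fun k hk => (hmom k (Nat.lt_succ_iff.mp (Finset.mem_range.mp hk))).const_mul _]
    have : ∀ k ∈ Finset.range (n + 1),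
        (∫ s, (iteratedDeriv k h u * b ^ k / k.factorial) * (s ^ k * K s)) =
        (iteratedDeriv k h u * b ^ k / k.factorial) * ∫ s, s ^ k * K s :=
      fun k _ => MeasureTheory.integral_const_mul _ _
    rw [Finset.sum_congr rfl this, Finset.sum_eq_single 0]
    · simp only [iteratedDeriv_zero, pow_zero, mul_one, Nat.factorial_zero, Nat.cast_one,
        div_one, one_mul]
      simp [hK1]
    · intro k _ hk
      rw [hKmom k (Nat.one_le_iff_ne_zero.mpr hk) (by
        have := Finset.mem_range.mp ‹k ∈ Finset.range (n + 1)›; omega), mul_zero]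
    · simp
  rw [hsplit, hTint, add_sub_cancel_left]
  calc |∫ s, K s * R s| ≤ ∫ s, ‖K s * R s‖ := by
        rw [← Real.norm_eq_abs]; exact norm_integral_le_integral_norm _
    _ ≤ ∫ s, c * (|s| ^ (n + 1) * |K s|) := integral_mono hKR.norm hKmc hpt
    _ = c * ∫ s, |s| ^ (n + 1) * |K s| := MeasureTheory.integral_const_mul _ _
    _ = (l * ∫ s, |s| ^ (n + 1) * |K s|) / n.factorial * b ^ (n + 1) := by
        rw [hc]; ring
end

section
/- Let m ≥ 2 be an integer, l ≥ 0, and let h : ℝ → ℝ be (m−1)-times differentiable with h^{(m−1)} Lipschitz with constant l on ℝ. Let K : ℝ → ℝ be a continuously differentiable order-m kernel with compact support. Then for every u ∈ ℝ and every b with 0 < b ≤ 1: |−(1/b²)·∫ K'((w − u)/b)·h(w) dw − h'(u)| ≤ (l·∫|K(s)·s^{m−1}| ds / (m−2)!)·b^{m−1}. -/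
open MeasureTheory

section Helpers
open intervalIntegral Finset

lemma abs_integral_abs_pow (k : ℕ) (y : ℝ) :
    |∫ t in (0:ℝ)..y, |t| ^ k| = |y| ^ (k + 1) / (k + 1) := by
  rcases le_or_gt 0 y with hy | hy
  · have h1 : (∫ t in (0:ℝ)..y, |t| ^ k) = ∫ t in (0:ℝ)..y, t ^ k := by
      apply intervalIntegral.integral_congr
      intro t ht
      rw [Set.uIcc_of_le hy] at ht
      simp only []
      rw [abs_of_nonneg ht.1]
    rw [h1, integral_pow, abs_of_nonneg hy, zero_pow k.succ_ne_zero, sub_zero]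
    rw [abs_of_nonneg (div_nonneg (pow_nonneg hy _) (by positivity))]
  · have h1 : (∫ t in (0:ℝ)..y, |t| ^ k) = - ∫ t in y..(0:ℝ), |t| ^ k := by
      rw [intervalIntegral.integral_symm]
    have h2 : (∫ t in y..(0:ℝ), |t| ^ k) = ∫ t in y..(0:ℝ), (-t) ^ k := by
      apply intervalIntegral.integral_congr
      intro t ht
      rw [Set.uIcc_of_le hy.le] at ht
      simp only []
      rw [abs_of_nonpos ht.2]
    have h3 : (∫ t in y..(0:ℝ), (-t) ^ k) = ∫ t in (-(0:ℝ))..(-y), t ^ k :=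
      intervalIntegral.integral_comp_neg (fun t => t ^ k)
    have hny : (0:ℝ) ≤ -y := by linarith
    rw [h1, h2, h3, neg_zero, integral_pow, abs_neg, abs_of_nonpos hy.le,
      zero_pow k.succ_ne_zero, sub_zero]
    rw [abs_of_nonneg (div_nonneg (pow_nonneg hny _) (by positivity))]


lemma ftc_pow_bound (g : ℝ → ℝ) (hg : Differentiable ℝ g) (u : ℝ) (C : ℝ) (hC : 0 ≤ C)
    (k : ℕ) (hbound : ∀ t, |deriv g t| ≤ C * |t - u| ^ k) (hgu : g u = 0) (x : ℝ) :
    |g x| ≤ C * |x - u| ^ (k + 1) / (k + 1) := by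
  have hmeas : AEStronglyMeasurable (deriv g) (volume.restrict (Set.uIoc u x)) :=
    (aestronglyMeasurable_deriv g volume).restrict
  have hle : ∀ t ∈ Set.uIoc u x, |t - u| ≤ |x - u| := by
    intro t ht
    rw [Set.uIoc] at ht
    rcases ht with ⟨h1, h2⟩
    rw [abs_sub_le_iff]
    constructor
    · calc t - u ≤ max u x - min u x := sub_le_sub h2 (min_le_left u x)
        _ = |x - u| := max_sub_min_eq_abs u x
    · calc u - t ≤ max u x - min u x := sub_le_sub (le_max_left u x) h1.le
        _ = |x - u| := max_sub_min_eq_abs u x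
  have hint : IntervalIntegrable (deriv g) volume u x := by
    apply IntervalIntegrable.mono_fun (f := fun _ => C * |x - u| ^ k)
      intervalIntegrable_const hmeas
    filter_upwards [ae_restrict_mem measurableSet_uIoc] with t ht
    rw [Real.norm_eq_abs, Real.norm_eq_abs]
    calc |deriv g t| ≤ C * |t - u| ^ k := hbound t
      _ ≤ C * |x - u| ^ k := by
          apply mul_le_mul_of_nonneg_left (pow_le_pow_left₀ (abs_nonneg _) (hle t ht) k) hC
      _ ≤ |C * |x - u| ^ k| := le_abs_self _
  have hftc : (∫ t in u..x, deriv g t) = g x - g u :=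
    integral_deriv_eq_sub (fun t _ => hg t) hint
  have hboundInt : IntervalIntegrable (fun t => C * |t - u| ^ k) volume u x := by
    apply Continuous.intervalIntegrable
    continuity
  have key : |∫ t in u..x, deriv g t| ≤ |∫ t in u..x, C * |t - u| ^ k| := by
    have := intervalIntegral.norm_integral_le_abs_of_norm_le (μ := volume) (f := deriv g)
      (a := u) (b := x) ?_ hboundInt
    · simpa [Real.norm_eq_abs] using this
    · filter_upwards [] with t
      rw [Real.norm_eq_abs]
      exact hbound t
  have hcomp : (∫ t in u..x, C * |t - u| ^ k) = C * ∫ t in u..x, |t - u| ^ k := by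
    exact intervalIntegral.integral_const_mul C _
  have hsub : (∫ t in u..x, |t - u| ^ k) = ∫ t in (u - u)..(x - u), |t| ^ k :=
    intervalIntegral.integral_comp_sub_right (fun t => |t| ^ k) u
  rw [hgu, sub_zero] at hftc
  rw [← hftc]
  refine key.trans ?_
  rw [hcomp, abs_mul, abs_of_nonneg hC, hsub, sub_self, abs_integral_abs_pow]
  rw [mul_div_assoc]


lemma taylor_lip_s5 (n : ℕ) (l : ℝ) (hl : 0 ≤ l) (f : ℝ → ℝ)
    (hdiff : ∀ k < n, Differentiable ℝ (iteratedDeriv k f))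
    (hlip : LipschitzWith l.toNNReal (iteratedDeriv n f)) (u x : ℝ) :
    |f x - ∑ j ∈ Finset.range (n + 1), iteratedDeriv j f u * (x - u) ^ j / (j.factorial : ℝ)|
      ≤ l * |x - u| ^ (n + 1) / ((n + 1).factorial : ℝ) := by
  induction n generalizing f u x with
  | zero =>
      norm_num [Finset.sum_range_one, iteratedDeriv_zero]
      have := hlip.dist_le_mul x u
      rw [Real.dist_eq, Real.dist_eq] at this
      rw [iteratedDeriv_zero] at this
      calc |f x - f u| ≤ (l.toNNReal : ℝ) * |x - u| := this
        _ = l * |x - u| := by rw [Real.coe_toNNReal l hl]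
  | succ n ih =>
      have hf : Differentiable ℝ f := by
        have := hdiff 0 (Nat.succ_pos n)
        rwa [iteratedDeriv_zero] at this
      have hdiff' : ∀ k < n, Differentiable ℝ (iteratedDeriv k (deriv f)) := by
        intro k hk
        rw [← iteratedDeriv_succ']
        exact hdiff (k + 1) (by omega)
      have hlip' : LipschitzWith l.toNNReal (iteratedDeriv n (deriv f)) := by
        rw [← iteratedDeriv_succ']
        exact hlip
      have IH := ih (deriv f) hdiff' hlip'
      set g : ℝ → ℝ := fun t =>
        f t - ∑ j ∈ Finset.range (n + 2), iteratedDeriv j f u * (t - u) ^ j / (j.factorial : ℝ)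
        with hg_def
      have hterm : ∀ (j : ℕ) (t : ℝ), HasDerivAt
          (fun t => iteratedDeriv j f u * (t - u) ^ j / (j.factorial : ℝ))
          (iteratedDeriv j f u * ((j : ℝ) * (t - u) ^ (j - 1) * 1) / (j.factorial : ℝ)) t := by
        intro j t
        exact (((((hasDerivAt_id t).sub_const u)).pow j).const_mul _).div_const _
      have hgderiv : ∀ t, HasDerivAt g
          (deriv f t - ∑ j ∈ Finset.range (n + 1),
            iteratedDeriv (j + 1) f u * (t - u) ^ j / (j.factorial : ℝ)) t := by
        intro t
        have hsum : HasDerivAt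
            (fun t => ∑ j ∈ Finset.range (n + 2),
              iteratedDeriv j f u * (t - u) ^ j / (j.factorial : ℝ))
            (∑ j ∈ Finset.range (n + 2),
              iteratedDeriv j f u * ((j : ℝ) * (t - u) ^ (j - 1) * 1) / (j.factorial : ℝ)) t :=
          HasDerivAt.fun_sum (fun j _ => hterm j t)
        have hre : (∑ j ∈ Finset.range (n + 2),
              iteratedDeriv j f u * ((j : ℝ) * (t - u) ^ (j - 1) * 1) / (j.factorial : ℝ))
            = ∑ j ∈ Finset.range (n + 1),
              iteratedDeriv (j + 1) f u * (t - u) ^ j / (j.factorial : ℝ) := by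
          rw [Finset.sum_range_succ']
          simp only [Nat.cast_zero, zero_mul, mul_zero, zero_div, add_zero, mul_one]
          apply Finset.sum_congr rfl
          intro i _
          have h1 : ((i : ℕ) + 1 : ℕ) - 1 = i := by omega
          rw [h1, Nat.factorial_succ]
          push_cast
          have hfac : ((i.factorial : ℝ)) ≠ 0 := Nat.cast_ne_zero.mpr i.factorial_ne_zero
          field_simp
        rw [hre] at hsum
        exact ((hf t).hasDerivAt).sub hsum
      have hgdiff : Differentiable ℝ g := fun t => (hgderiv t).differentiableAt
      have hgu : g u = 0 := by
        rw [hg_def]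
        simp only []
        rw [Finset.sum_eq_single 0]
        · simp [iteratedDeriv_zero]
        · intro j _ hj
          rw [sub_self, zero_pow hj, mul_zero, zero_div]
        · intro habs
          exact absurd (Finset.mem_range.mpr (by omega)) habs
      have hbound : ∀ t, |deriv g t| ≤ (l / ((n + 1).factorial : ℝ)) * |t - u| ^ (n + 1) := by
        intro t
        rw [(hgderiv t).deriv]
        have := IH u t
        have heq : (∑ j ∈ Finset.range (n + 1),
            iteratedDeriv j (deriv f) u * (t - u) ^ j / (j.factorial : ℝ))
            = ∑ j ∈ Finset.range (n + 1),
              iteratedDeriv (j + 1) f u * (t - u) ^ j / (j.factorial : ℝ) := by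
          apply Finset.sum_congr rfl
          intro j _
          rw [← iteratedDeriv_succ']
        rw [heq] at this
        calc |deriv f t - ∑ j ∈ Finset.range (n + 1),
              iteratedDeriv (j + 1) f u * (t - u) ^ j / (j.factorial : ℝ)|
            ≤ l * |t - u| ^ (n + 1) / ((n + 1).factorial : ℝ) := this
          _ = (l / ((n + 1).factorial : ℝ)) * |t - u| ^ (n + 1) := by ring
      have hCnn : 0 ≤ l / ((n + 1).factorial : ℝ) := by positivity
      have key := ftc_pow_bound g hgdiff u _ hCnn (n + 1) hbound hgu x
      calc |f x - ∑ j ∈ Finset.range (n + 2),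
            iteratedDeriv j f u * (x - u) ^ j / (j.factorial : ℝ)|
          ≤ (l / ((n + 1).factorial : ℝ)) * |x - u| ^ (n + 2) / ((n + 1 : ℕ) + 1) := key
        _ = l * |x - u| ^ (n + 2) / ((n + 2).factorial : ℝ) := by
            rw [Nat.factorial_succ (n + 1)]
            have h1 : ((n + 1).factorial : ℝ) ≠ 0 := Nat.cast_ne_zero.mpr (n+1).factorial_ne_zero
            push_cast
            rw [div_mul_eq_mul_div, div_div]
            congr 1
            push_cast
            ring

end Helpers

/-- Lemma A.3 of the paper: bias bound for kernel derivative
estimation. If `h` is `(m-1)`-times differentiable with `l`-Lipschitz `(m-1)`-st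
derivative, and `K` is a continuously differentiable order-`m` kernel with compact
support, then for every `u` and bandwidth `0 < b ≤ 1`,
`|-(1/b²) ∫ K'((w-u)/b) h(w) dw - h'(u)| ≤ (l ∫ |K(s) s^{m-1}| ds / (m-2)!) b^{m-1}`. -/
theorem kernel_derivative_bias_bound
    (m : ℕ) (hm : 2 ≤ m) (l : ℝ) (hl : 0 ≤ l) (h K : ℝ → ℝ)
    (hdiff : ∀ k < m - 1, Differentiable ℝ (iteratedDeriv k h))
    (hlip : LipschitzWith l.toNNReal (iteratedDeriv (m - 1) h))
    (hKsmooth : ContDiff ℝ 1 K) (hKsupp : HasCompactSupport K)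
    (hK1 : (∫ s, K s) = 1)
    (hKmom : ∀ j : ℕ, 1 ≤ j → j ≤ m - 1 → (∫ s, s ^ j * K s) = 0)
    (hKm : Integrable (fun s => |s| ^ m * |K s|)) :
    ∀ u b : ℝ, 0 < b → b ≤ 1 →
      |(-(1 / b ^ 2)) * (∫ w, deriv K ((w - u) / b) * h w) - deriv h u| ≤
        (l * ∫ s, |K s * s ^ (m - 1)|) / (m - 2).factorial * b ^ (m - 1) := by
  intro u b hb hb1
  have hbne : b ≠ 0 := ne_of_gt hb
  have hKc : Continuous K := hKsmooth.continuous
  have hK'c : Continuous (deriv K) := hKsmooth.continuous_deriv le_rfl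
  have hh : Differentiable ℝ h := by
    have := hdiff 0 (by omega); rwa [iteratedDeriv_zero] at this
  have hh'c : Continuous (deriv h) := by
    rcases Nat.lt_or_ge 1 (m - 1) with hc | hc
    · have := hdiff 1 hc
      rw [iteratedDeriv_one] at this
      exact this.continuous
    · have hm1e : m - 1 = 1 := le_antisymm hc (by omega)
      have := hlip.continuous
      rwa [hm1e, iteratedDeriv_one] at this
  -- Step 1: change of variables
  have step1 : (∫ w, deriv K ((w - u) / b) * h w)
      = b * ∫ s, deriv K s * h (u + b * s) := by
    have hfun : (fun w => deriv K ((w - u) / b) * h w)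
        = fun w => (fun s => deriv K s * h (u + b * s)) ((w - u) / b) := by
      funext w
      simp only []
      have : u + b * ((w - u) / b) = w := by field_simp; ring
      rw [this]
    rw [hfun]
    calc (∫ w, (fun s => deriv K s * h (u + b * s)) ((w - u) / b))
        = ∫ y, (fun s => deriv K s * h (u + b * s)) (y / b) :=
          integral_sub_right_eq_self (fun y => (fun s => deriv K s * h (u + b * s)) (y / b)) u
      _ = |b| • ∫ s, deriv K s * h (u + b * s) :=
          Measure.integral_comp_div (fun s => deriv K s * h (u + b * s)) b
      _ = b * ∫ s, deriv K s * h (u + b * s) := by rw [abs_of_pos hb, smul_eq_mul]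
  -- Step 2: integration by parts
  set G : ℝ → ℝ := fun s => K s * h (u + b * s) with hGdef
  have hGsupp : HasCompactSupport G := hKsupp.mul_right
  have hinner : ∀ s : ℝ, HasDerivAt (fun s => h (u + b * s)) (deriv h (u + b * s) * b) s := by
    intro s
    have h2 : HasDerivAt (fun s : ℝ => u + b * s) b s := by
      simpa using ((hasDerivAt_id s).const_mul b).const_add u
    exact (hh (u + b * s)).hasDerivAt.comp s h2
  have hGderiv : ∀ s, HasDerivAt G
      (deriv K s * h (u + b * s) + K s * (deriv h (u + b * s) * b)) s := by
    intro s
    exact (hKsmooth.differentiable one_ne_zero s).hasDerivAt.mul (hinner s)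
  have hGderiv_eq : deriv G
      = fun s => deriv K s * h (u + b * s) + K s * (deriv h (u + b * s) * b) :=
    funext fun s => (hGderiv s).deriv
  have hGC1 : ContDiff ℝ 1 G := by
    rw [contDiff_one_iff_deriv]
    refine ⟨fun s => (hGderiv s).differentiableAt, ?_⟩
    rw [hGderiv_eq]
    have hcomp : Continuous (fun s : ℝ => u + b * s) := by continuity
    exact (hK'c.mul (hh.continuous.comp hcomp)).add
      (hKc.mul ((hh'c.comp hcomp).mul continuous_const))
  have hderivG_int : Integrable (deriv G) :=
    (hGC1.continuous_deriv le_rfl).integrable_of_hasCompactSupport hGsupp.deriv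
  have hzero : (∫ s, deriv G s) = 0 := by
    have h1 := hGsupp.integral_Iic_deriv_eq hGC1 0
    have h2 := hGsupp.integral_Ioi_deriv_eq hGC1 0
    rw [← intervalIntegral.integral_Iic_add_Ioi hderivG_int.integrableOn hderivG_int.integrableOn, h1, h2]
    ring
  have hcomp : Continuous (fun s : ℝ => u + b * s) := by continuity
  have hFint : Integrable (fun s => deriv K s * h (u + b * s)) := by
    apply Continuous.integrable_of_hasCompactSupport
    · exact hK'c.mul (hh.continuous.comp hcomp)
    · exact hKsupp.deriv.mul_right
  have hKh'int : Integrable (fun s => K s * (deriv h (u + b * s) * b)) := by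
    apply Continuous.integrable_of_hasCompactSupport
    · exact hKc.mul ((hh'c.comp hcomp).mul continuous_const)
    · exact hKsupp.mul_right
  have hsplit : (∫ s, deriv G s)
      = (∫ s, deriv K s * h (u + b * s)) + ∫ s, K s * (deriv h (u + b * s) * b) := by
    rw [hGderiv_eq, integral_add hFint hKh'int]
  set I : ℝ := ∫ s, K s * deriv h (u + b * s) with hIdef
  have hIb : (∫ s, K s * (deriv h (u + b * s) * b)) = b * I := by
    rw [hIdef, ← integral_const_mul]
    congr 1
    funext s
    ring
  have hFI : (∫ s, deriv K s * h (u + b * s)) = -(b * I) := by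
    rw [hsplit, hIb] at hzero
    linarith
  have hmain : (-(1 / b ^ 2)) * (∫ w, deriv K ((w - u) / b) * h w) - deriv h u
      = I - deriv h u := by
    rw [step1, hFI]
    field_simp
  rw [hmain]
  -- Step 3: Taylor expansion
  have hdiff'' : ∀ k < m - 2, Differentiable ℝ (iteratedDeriv k (deriv h)) := by
    intro k hk
    rw [← iteratedDeriv_succ']
    exact hdiff (k + 1) (by omega)
  have hlip'' : LipschitzWith l.toNNReal (iteratedDeriv (m - 2) (deriv h)) := by
    rw [← iteratedDeriv_succ']
    have hmm : m - 2 + 1 = m - 1 := by omega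
    rw [hmm]
    exact hlip
  have hm2 : m - 2 + 1 = m - 1 := by omega
  set P : ℝ → ℝ := fun s => ∑ j ∈ Finset.range (m - 1),
    iteratedDeriv j (deriv h) u * (b * s) ^ j / (j.factorial : ℝ) with hPdef
  have htay : ∀ s, |deriv h (u + b * s) - P s|
      ≤ l * (b * |s|) ^ (m - 1) / ((m - 1).factorial : ℝ) := by
    intro s
    have := taylor_lip_s5 (m - 2) l hl (deriv h) hdiff'' hlip'' u (u + b * s)
    rw [hm2] at this
    have harg : u + b * s - u = b * s := by ring
    rw [harg, abs_mul, abs_of_pos hb] at this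
    exact this
  have hfact_le : ((m - 2).factorial : ℝ) ≤ ((m - 1).factorial : ℝ) :=
    Nat.cast_le.mpr (Nat.factorial_le (by omega))
  have hfact_pos : (0 : ℝ) < ((m - 2).factorial : ℝ) :=
    Nat.cast_pos.mpr (m - 2).factorial_pos
  have htay' : ∀ s, |deriv h (u + b * s) - P s|
      ≤ (l * b ^ (m - 1) / ((m - 2).factorial : ℝ)) * |s| ^ (m - 1) := by
    intro s
    refine (htay s).trans ?_
    rw [mul_pow]
    calc l * (b ^ (m - 1) * |s| ^ (m - 1)) / ((m - 1).factorial : ℝ)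
        ≤ l * (b ^ (m - 1) * |s| ^ (m - 1)) / ((m - 2).factorial : ℝ) := by
          apply div_le_div_of_nonneg_left ?_ hfact_pos hfact_le
          positivity
      _ = (l * b ^ (m - 1) / ((m - 2).factorial : ℝ)) * |s| ^ (m - 1) := by ring
  -- ∫ K * P = deriv h u
  have hPterm_int : ∀ j, Integrable
      (fun s => K s * (iteratedDeriv j (deriv h) u * (b * s) ^ j / (j.factorial : ℝ))) := by
    intro j
    apply Continuous.integrable_of_hasCompactSupport
    · apply hKc.mul
      have : Continuous (fun s : ℝ => iteratedDeriv j (deriv h) u * (b * s) ^ j / (j.factorial : ℝ)) := by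
        continuity
      exact this
    · exact hKsupp.mul_right
  have hKP : (∫ s, K s * P s) = deriv h u := by
    have h1 : (fun s => K s * P s) = fun s => ∑ j ∈ Finset.range (m - 1),
        K s * (iteratedDeriv j (deriv h) u * (b * s) ^ j / (j.factorial : ℝ)) := by
      funext s
      rw [hPdef]
      simp only []
      rw [Finset.mul_sum]
    rw [h1, integral_finset_sum _ (fun j _ => hPterm_int j)]
    have h2 : ∀ j ∈ Finset.range (m - 1),
        (∫ s, K s * (iteratedDeriv j (deriv h) u * (b * s) ^ j / (j.factorial : ℝ)))
        = (iteratedDeriv j (deriv h) u * b ^ j / (j.factorial : ℝ)) * ∫ s, s ^ j * K s := by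
      intro j _
      rw [← integral_const_mul]
      congr 1
      funext s
      rw [mul_pow]
      ring
    rw [Finset.sum_congr rfl h2]
    rw [Finset.sum_eq_single 0]
    · simp only [pow_zero, one_mul, iteratedDeriv_zero, Nat.factorial_zero, Nat.cast_one,
        mul_one, div_one]
      rw [hK1, mul_one]
    · intro j hj hj0
      rw [hKmom j (by omega) (by have := Finset.mem_range.mp hj; omega), mul_zero]
    · intro habs
      exact absurd (Finset.mem_range.mpr (by omega)) habs
  have hKPint : Integrable (fun s => K s * P s) := by
    have h1 : (fun s => K s * P s) = fun s => ∑ j ∈ Finset.range (m - 1),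
        K s * (iteratedDeriv j (deriv h) u * (b * s) ^ j / (j.factorial : ℝ)) := by
      funext s
      rw [hPdef]
      simp only []
      rw [Finset.mul_sum]
    rw [h1]
    exact integrable_finset_sum _ (fun j _ => hPterm_int j)
  have hKh'int2 : Integrable (fun s => K s * deriv h (u + b * s)) := by
    apply Continuous.integrable_of_hasCompactSupport
    · exact hKc.mul (hh'c.comp hcomp)
    · exact hKsupp.mul_right
  have hIsub : I - deriv h u = ∫ s, K s * (deriv h (u + b * s) - P s) := by
    rw [hIdef, ← hKP, ← integral_sub hKh'int2 hKPint]
    congr 1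
    funext s
    ring
  rw [hIsub]
  -- Step 4: final bound
  set c : ℝ := l * b ^ (m - 1) / ((m - 2).factorial : ℝ) with hcdef
  have hcnn : 0 ≤ c := by rw [hcdef]; positivity
  have habs : |∫ s, K s * (deriv h (u + b * s) - P s)|
      ≤ ∫ s, |K s * (deriv h (u + b * s) - P s)| := by
    have := norm_integral_le_integral_norm (μ := volume)
      (f := fun s => K s * (deriv h (u + b * s) - P s))
    simp only [Real.norm_eq_abs] at this
    exact this
  have hbnd_int : Integrable (fun s => c * |K s * s ^ (m - 1)|) := by
    apply Integrable.const_mul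
    apply Continuous.integrable_of_hasCompactSupport
    · exact (hKc.mul (continuous_pow _)).abs
    · exact (hKsupp.mul_right).abs
  have hptwise : ∀ s, |K s * (deriv h (u + b * s) - P s)| ≤ c * |K s * s ^ (m - 1)| := by
    intro s
    rw [abs_mul, abs_mul, abs_pow]
    calc |K s| * |deriv h (u + b * s) - P s| ≤ |K s| * (c * |s| ^ (m - 1)) :=
          mul_le_mul_of_nonneg_left (htay' s) (abs_nonneg _)
      _ = c * (|K s| * |s| ^ (m - 1)) := by ring
  have hmono : (∫ s, |K s * (deriv h (u + b * s) - P s)|)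
      ≤ ∫ s, c * |K s * s ^ (m - 1)| := by
    apply integral_mono_of_nonneg
    · filter_upwards [] with s
      exact abs_nonneg _
    · exact hbnd_int
    · filter_upwards [] with s
      exact hptwise s
  calc |∫ s, K s * (deriv h (u + b * s) - P s)|
      ≤ ∫ s, c * |K s * s ^ (m - 1)| := habs.trans hmono
    _ = c * ∫ s, |K s * s ^ (m - 1)| := integral_const_mul c _
    _ = (l * ∫ s, |K s * s ^ (m - 1)|) / ((m - 2).factorial : ℝ) * b ^ (m - 1) := by
        rw [hcdef]
        ring
end

section
/- Let l ≥ 0 and let g : ℝ² → ℝ be Lipschitz with constant l with respect to the Euclidean norm on ℝ². Let β ≥ 0 and suppose that for every (x, y) ∈ ℝ² and every ε > 0, |∫_{x−ε}^{x+ε} ∫_{y−ε}^{y+ε} g(u, v) dv du| ≤ β. Then |g(x, y)| ≤ (1/4 + √2·l)·β^{1/3} for every (x, y) ∈ ℝ². -/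
open MeasureTheory intervalIntegral

lemma key_eps_bound
    (l β : ℝ) (hl : 0 ≤ l) (g : ℝ → ℝ → ℝ)
    (hg : ∀ x₁ y₁ x₂ y₂ : ℝ,
      |g x₁ y₁ - g x₂ y₂| ≤ l * Real.sqrt ((x₁ - x₂) ^ 2 + (y₁ - y₂) ^ 2))
    (hint : ∀ x y ε : ℝ, 0 < ε →
      |∫ u in x - ε..x + ε, ∫ v in y - ε..y + ε, g u v| ≤ β)
    (x y ε : ℝ) (hε : 0 < ε) :
    |g x y| ≤ β / (4 * ε ^ 2) + Real.sqrt 2 * l * ε := by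
  -- continuity of g in the second variable
  have lipv : ∀ u, LipschitzWith (Real.toNNReal l) (g u) := by
    intro u
    refine LipschitzWith.of_dist_le_mul fun v w => ?_
    have h := hg u v u w
    simp only [sub_self, ne_eq] at h
    rw [Real.dist_eq, Real.dist_eq, Real.coe_toNNReal l hl]
    calc |g u v - g u w| ≤ l * Real.sqrt (0 ^ 2 + (v - w) ^ 2) := h
      _ = l * |v - w| := by
          rw [show (0:ℝ)^2 + (v-w)^2 = (v-w)^2 by ring, Real.sqrt_sq_eq_abs]
  have hguint : ∀ u, IntervalIntegrable (g u) volume (y - ε) (y + ε) :=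
    fun u => ((lipv u).continuous).intervalIntegrable _ _
  set Φ : ℝ → ℝ := fun u => ∫ v in y - ε..y + ε, g u v with hΦ
  -- Φ is Lipschitz hence integrable
  have lipΦ : LipschitzWith (Real.toNNReal (2 * ε * l)) Φ := by
    refine LipschitzWith.of_dist_le_mul fun u w => ?_
    rw [Real.dist_eq, Real.dist_eq, Real.coe_toNNReal _ (by positivity)]
    have : Φ u - Φ w = ∫ v in y - ε..y + ε, (g u v - g w v) := by
      rw [intervalIntegral.integral_sub (hguint u) (hguint w)]
    rw [this]
    have hb : ∀ v ∈ Set.uIoc (y - ε) (y + ε), ‖g u v - g w v‖ ≤ l * |u - w| := by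
      intro v _
      calc ‖g u v - g w v‖ ≤ l * Real.sqrt ((u - w) ^ 2 + (v - v) ^ 2) := hg u v w v
        _ = l * |u - w| := by
            rw [show (u-w)^2 + (v-v)^2 = (u-w)^2 by ring, Real.sqrt_sq_eq_abs]
    calc |∫ v in y - ε..y + ε, (g u v - g w v)|
        ≤ l * |u - w| * |(y + ε) - (y - ε)| :=
          intervalIntegral.norm_integral_le_of_norm_le_const hb
      _ = 2 * ε * l * |u - w| := by
          rw [show (y + ε) - (y - ε) = 2 * ε by ring,
            abs_of_pos (show (0:ℝ) < 2 * ε by positivity)]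
          ring
  have hΦint : IntervalIntegrable Φ volume (x - ε) (x + ε) :=
    lipΦ.continuous.intervalIntegrable _ _
  -- pointwise bound on the square
  have hpt : ∀ u ∈ Set.uIoc (x - ε) (x + ε), ∀ v ∈ Set.uIoc (y - ε) (y + ε),
      |g u v - g x y| ≤ Real.sqrt 2 * l * ε := by
    intro u hu v hv
    rw [Set.uIoc_of_le (by linarith : x - ε ≤ x + ε)] at hu
    rw [Set.uIoc_of_le (by linarith : y - ε ≤ y + ε)] at hv
    have h1 : (u - x) ^ 2 ≤ ε ^ 2 := sq_le_sq' (by linarith [hu.1]) (by linarith [hu.2])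
    have h2 : (v - y) ^ 2 ≤ ε ^ 2 := sq_le_sq' (by linarith [hv.1]) (by linarith [hv.2])
    calc |g u v - g x y| ≤ l * Real.sqrt ((u - x) ^ 2 + (v - y) ^ 2) := hg u v x y
      _ ≤ l * Real.sqrt (ε ^ 2 + ε ^ 2) :=
          mul_le_mul_of_nonneg_left (Real.sqrt_le_sqrt (by linarith)) hl
      _ = Real.sqrt 2 * l * ε := by
          rw [show ε ^ 2 + ε ^ 2 = (Real.sqrt 2 * ε) ^ 2 by
            rw [mul_pow, Real.sq_sqrt (by norm_num : (0:ℝ) ≤ 2)]; ring,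
            Real.sqrt_sq (by positivity)]
          ring
  -- inner identity
  have inner_eq : ∀ u, ∫ v in y - ε..y + ε, (g u v - g x y) = Φ u - 2 * ε * g x y := by
    intro u
    rw [intervalIntegral.integral_sub (hguint u) intervalIntegrable_const,
      intervalIntegral.integral_const, smul_eq_mul]
    ring_nf
    rfl
  -- main bound
  have hbig : |(∫ u in x - ε..x + ε, Φ u) - 2 * ε * (2 * ε * g x y)|
      ≤ Real.sqrt 2 * l * ε * (2 * ε) * (2 * ε) := by
    have heq : (∫ u in x - ε..x + ε, Φ u) - 2 * ε * (2 * ε * g x y)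
        = ∫ u in x - ε..x + ε, (Φ u - 2 * ε * g x y) := by
      rw [intervalIntegral.integral_sub hΦint intervalIntegrable_const,
        intervalIntegral.integral_const, smul_eq_mul]
      ring_nf
    rw [heq]
    have hb : ∀ u ∈ Set.uIoc (x - ε) (x + ε),
        ‖Φ u - 2 * ε * g x y‖ ≤ Real.sqrt 2 * l * ε * (2 * ε) := by
      intro u hu
      rw [← inner_eq u]
      calc ‖∫ v in y - ε..y + ε, (g u v - g x y)‖
          ≤ Real.sqrt 2 * l * ε * |(y + ε) - (y - ε)| :=
            intervalIntegral.norm_integral_le_of_norm_le_const (fun v hv => hpt u hu v hv)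
        _ = Real.sqrt 2 * l * ε * (2 * ε) := by
            rw [show (y + ε) - (y - ε) = 2 * ε by ring,
              abs_of_pos (show (0:ℝ) < 2 * ε by positivity)]
    calc ‖∫ u in x - ε..x + ε, (Φ u - 2 * ε * g x y)‖
        ≤ Real.sqrt 2 * l * ε * (2 * ε) * |(x + ε) - (x - ε)| :=
          intervalIntegral.norm_integral_le_of_norm_le_const hb
      _ = Real.sqrt 2 * l * ε * (2 * ε) * (2 * ε) := by
          rw [show (x + ε) - (x - ε) = 2 * ε by ring,
            abs_of_pos (show (0:ℝ) < 2 * ε by positivity)]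
  have hI : |∫ u in x - ε..x + ε, Φ u| ≤ β := hint x y ε hε
  have h4 : 4 * ε ^ 2 * |g x y| ≤ β + 4 * Real.sqrt 2 * l * ε ^ 3 := by
    have habs : |2 * ε * (2 * ε * g x y)|
        ≤ |∫ u in x - ε..x + ε, Φ u| + |(∫ u in x - ε..x + ε, Φ u) - 2 * ε * (2 * ε * g x y)| := by
      have := abs_sub_abs_le_abs_sub (2 * ε * (2 * ε * g x y)) (∫ u in x - ε..x + ε, Φ u)
      have h2 := abs_sub_comm (2 * ε * (2 * ε * g x y)) (∫ u in x - ε..x + ε, Φ u)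
      linarith [abs_sub_abs_le_abs_sub (2 * ε * (2 * ε * g x y)) (∫ u in x - ε..x + ε, Φ u),
        (abs_sub_comm (2 * ε * (2 * ε * g x y)) (∫ u in x - ε..x + ε, Φ u)).le]
    have h5 : |2 * ε * (2 * ε * g x y)| = 4 * ε ^ 2 * |g x y| := by
      rw [show 2 * ε * (2 * ε * g x y) = (4 * ε ^ 2) * g x y by ring, abs_mul,
        abs_of_pos (show (0:ℝ) < 4 * ε ^ 2 by positivity)]
    rw [h5] at habs
    nlinarith [hbig, hI]
  rw [show β / (4 * ε ^ 2) + Real.sqrt 2 * l * ε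
      = (β + 4 * Real.sqrt 2 * l * ε ^ 3) / (4 * ε ^ 2) by field_simp,
    le_div_iff₀ (by positivity : (0:ℝ) < 4 * ε ^ 2)]
  nlinarith [h4]

/-- deterministic core of Lemma F.3 of the paper.  A bivariate
`l`-Lipschitz function (w.r.t. the Euclidean norm on `ℝ²`) whose integral over every
square `[x-ε, x+ε] × [y-ε, y+ε]` is bounded in absolute value by `β` satisfies
`|g(x,y)| ≤ (1/4 + √2 l) β^{1/3}` everywhere. -/
theorem lipschitz_small_square_integral_bound
    (l β : ℝ) (hl : 0 ≤ l) (hβ : 0 ≤ β) (g : ℝ → ℝ → ℝ)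
    (hg : ∀ x₁ y₁ x₂ y₂ : ℝ,
      |g x₁ y₁ - g x₂ y₂| ≤ l * Real.sqrt ((x₁ - x₂) ^ 2 + (y₁ - y₂) ^ 2))
    (hint : ∀ x y ε : ℝ, 0 < ε →
      |∫ u in x - ε..x + ε, ∫ v in y - ε..y + ε, g u v| ≤ β) :
    ∀ x y : ℝ, |g x y| ≤ (1 / 4 + Real.sqrt 2 * l) * β ^ ((1 : ℝ) / 3) := by
  intro x y
  have key := key_eps_bound l β hl g hg hint x y
  rcases eq_or_lt_of_le hβ with hβ0 | hβpos
  · -- β = 0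
    rw [← hβ0, Real.zero_rpow (by norm_num : (1:ℝ)/3 ≠ 0), mul_zero]
    have h0 : ∀ δ > (0:ℝ), |g x y| ≤ δ := by
      intro δ hδ
      have hεpos : 0 < δ / (Real.sqrt 2 * l + 1) := by
        have h1 : (0:ℝ) < Real.sqrt 2 * l + 1 := by positivity
        positivity
      have hk := key _ hεpos
      rw [← hβ0] at hk
      have h1 : (0:ℝ) < Real.sqrt 2 * l + 1 := by positivity
      have h2 : Real.sqrt 2 * l * (δ / (Real.sqrt 2 * l + 1)) ≤ δ := by
        rw [mul_div_assoc', div_le_iff₀ h1]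
        nlinarith [Real.sqrt_nonneg 2, hδ.le, mul_nonneg (Real.sqrt_nonneg 2) hl]
      have h3 : (0:ℝ) / (4 * (δ / (Real.sqrt 2 * l + 1)) ^ 2) = 0 := zero_div _
      rw [h3, zero_add] at hk
      linarith
    exact le_of_forall_pos_le_add fun δ hδ => by rw [zero_add]; exact h0 δ hδ
  · -- β > 0
    set ε : ℝ := β ^ ((1:ℝ)/3) with hεdef
    have hεpos : 0 < ε := Real.rpow_pos_of_pos hβpos _
    have hcube : ε ^ 3 = β := by
      rw [hεdef, ← Real.rpow_natCast (β ^ ((1:ℝ)/3)) 3, ← Real.rpow_mul hβ]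
      norm_num
    have hk := key ε hεpos
    have hdiv : β / (4 * ε ^ 2) = ε / 4 := by
      rw [← hcube]; field_simp
    rw [hdiv] at hk
    calc |g x y| ≤ ε / 4 + Real.sqrt 2 * l * ε := hk
      _ = (1 / 4 + Real.sqrt 2 * l) * ε := by ring
end

section
/- Let c > 0, F̄ ≥ c/2, H̄ ≥ 0. Let f, h, f', h', f̂, ĥ, f̂₁, ĥ₁ be real numbers satisfying: f ≥ c; max{|f|, |h|, |f'|} ≤ F̄; |h'| ≤ H̄; |f̂ − f| ≤ c/2; |ĥ − h| ≤ c/2. Then |(ĥ₁·f̂ − ĥ·f̂₁)/f̂² − (h'·f − h·f')/f²| ≤ C·(|f̂ − f| + |ĥ − h| + |f̂₁ − f'| + |ĥ₁ − h'|), where C = 12·F̄·(H̄·F̄ + F̄²)/c⁴ + 4·(2·F̄ + H̄)/c². -/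
set_option maxHeartbeats 1000000


/-- quotient-rule perturbation bound from the proof of Lemma 4.3 of
the paper.  The plug-in estimator `(ĥ₁ f̂ - ĥ f̂₁)/f̂²` of the regression derivative
`(h' f - h f')/f²` has error controlled linearly by the four elementary estimation
errors. -/
theorem derivative_ratio_perturbation_bound
    (c Fbar Hbar : ℝ) (hc : 0 < c) (hFbar : c / 2 ≤ Fbar) (hHbar : 0 ≤ Hbar)
    (f h f' h' fhat hhat fhat₁ hhat₁ : ℝ)
    (hf : c ≤ f)
    (hfF : |f| ≤ Fbar) (hhF : |h| ≤ Fbar) (hf'F : |f'| ≤ Fbar)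
    (hh'H : |h'| ≤ Hbar)
    (hferr : |fhat - f| ≤ c / 2) (hherr : |hhat - h| ≤ c / 2) :
    |(hhat₁ * fhat - hhat * fhat₁) / fhat ^ 2 - (h' * f - h * f') / f ^ 2| ≤
      (12 * Fbar * (Hbar * Fbar + Fbar ^ 2) / c ^ 4 + 4 * (2 * Fbar + Hbar) / c ^ 2) *
        (|fhat - f| + |hhat - h| + |fhat₁ - f'| + |hhat₁ - h'|) := by
  have hF0 : (0:ℝ) ≤ Fbar := le_trans (by linarith) hFbar
  have hfe := abs_le.mp hferr
  have hhe := abs_le.mp hherr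
  have hfb := abs_le.mp hfF
  have hhb := abs_le.mp hhF
  have hfhat : c/2 ≤ fhat := by linarith [hfe.1]
  have hfpos : 0 < f := lt_of_lt_of_le hc hf
  have hfhpos : 0 < fhat := by linarith
  have hfhne : fhat ≠ 0 := ne_of_gt hfhpos
  have hfne : f ≠ 0 := ne_of_gt hfpos
  have hfhsq : (c/2)^2 ≤ fhat^2 := by nlinarith
  have hfsq : c^2 ≤ f^2 := by nlinarith
  have hfhatabs : |fhat| ≤ 2*Fbar := by
    rw [abs_le]; constructor <;> linarith [hfe.1, hfe.2, hfb.1, hfb.2]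
  have hhhatabs : |hhat| ≤ 2*Fbar := by
    rw [abs_le]; constructor <;> linarith [hhe.1, hhe.2, hhb.1, hhb.2]
  set S := |fhat - f| + |hhat - h| + |fhat₁ - f'| + |hhat₁ - h'| with hS
  have hS0 : 0 ≤ S := by positivity
  have key : (hhat₁ * fhat - hhat * fhat₁) / fhat ^ 2 - (h' * f - h * f') / f ^ 2
      = (fhat*(hhat₁ - h') + h'*(fhat - f) - hhat*(fhat₁ - f') - f'*(hhat - h))/fhat^2
        + (h'*f - h*f') * ((f - fhat)*(f + fhat)) / (fhat^2 * f^2) := by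
    field_simp
    ring
  rw [key]
  have hnum1 : |fhat*(hhat₁ - h') + h'*(fhat - f) - hhat*(fhat₁ - f') - f'*(hhat - h)|
      ≤ (2*Fbar + Hbar) * S := by
    have h1 : |fhat*(hhat₁ - h') + h'*(fhat - f) - hhat*(fhat₁ - f') - f'*(hhat - h)|
        ≤ |fhat| * |hhat₁ - h'| + |h'| * |fhat - f| + |hhat| * |fhat₁ - f'| + |f'| * |hhat - h| := by
      calc _ ≤ |fhat*(hhat₁ - h') + h'*(fhat - f) - hhat*(fhat₁ - f')| + |f'*(hhat - h)| :=
              abs_sub _ _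
        _ ≤ |fhat*(hhat₁ - h') + h'*(fhat - f)| + |hhat*(fhat₁ - f')| + |f'*(hhat - h)| := by
              gcongr; exact abs_sub _ _
        _ ≤ |fhat*(hhat₁ - h')| + |h'*(fhat - f)| + |hhat*(fhat₁ - f')| + |f'*(hhat - h)| := by
              gcongr; exact abs_add_le _ _
        _ = |fhat| * |hhat₁ - h'| + |h'| * |fhat - f| + |hhat| * |fhat₁ - f'| + |f'| * |hhat - h| := by
              simp [abs_mul]
    have hb1 : |fhat| * |hhat₁ - h'| ≤ (2*Fbar + Hbar) * |hhat₁ - h'| :=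
      mul_le_mul_of_nonneg_right (by linarith) (abs_nonneg _)
    have hb2 : |h'| * |fhat - f| ≤ (2*Fbar + Hbar) * |fhat - f| :=
      mul_le_mul_of_nonneg_right (by linarith) (abs_nonneg _)
    have hb3 : |hhat| * |fhat₁ - f'| ≤ (2*Fbar + Hbar) * |fhat₁ - f'| :=
      mul_le_mul_of_nonneg_right (by linarith) (abs_nonneg _)
    have hb4 : |f'| * |hhat - h| ≤ (2*Fbar + Hbar) * |hhat - h| :=
      mul_le_mul_of_nonneg_right (by linarith) (abs_nonneg _)
    calc _ ≤ |fhat| * |hhat₁ - h'| + |h'| * |fhat - f| + |hhat| * |fhat₁ - f'| + |f'| * |hhat - h| := h1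
      _ ≤ (2*Fbar + Hbar) * |hhat₁ - h'| + (2*Fbar + Hbar) * |fhat - f|
            + (2*Fbar + Hbar) * |fhat₁ - f'| + (2*Fbar + Hbar) * |hhat - h| := by
        linarith
      _ = (2*Fbar + Hbar) * S := by rw [hS]; ring
  have hnum2 : |(h'*f - h*f') * ((f - fhat)*(f + fhat))|
      ≤ (Hbar*Fbar + Fbar^2) * (S * (3*Fbar)) := by
    have ha : |h'*f - h*f'| ≤ Hbar*Fbar + Fbar^2 := by
      calc |h'*f - h*f'| ≤ |h'*f| + |h*f'| := abs_sub _ _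
        _ = |h'| * |f| + |h| * |f'| := by simp [abs_mul]
        _ ≤ Hbar*Fbar + Fbar*Fbar := by
            have := abs_nonneg h'; have := abs_nonneg h; nlinarith [abs_nonneg f, abs_nonneg f']
        _ = Hbar*Fbar + Fbar^2 := by ring
    have hb : |(f - fhat)*(f + fhat)| ≤ S * (3*Fbar) := by
      rw [abs_mul]
      have h1 : |f - fhat| ≤ S := by
        rw [abs_sub_comm]; rw [hS]
        have := abs_nonneg (hhat - h); have := abs_nonneg (fhat₁ - f')
        have := abs_nonneg (hhat₁ - h'); linarith
      have h2 : |f + fhat| ≤ 3*Fbar := by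
        calc |f + fhat| ≤ |f| + |fhat| := abs_add_le _ _
          _ ≤ Fbar + 2*Fbar := by linarith
          _ = 3*Fbar := by ring
      exact mul_le_mul h1 h2 (abs_nonneg _) hS0
    calc |(h'*f - h*f') * ((f - fhat)*(f + fhat))|
        = |h'*f - h*f'| * |(f - fhat)*(f + fhat)| := abs_mul _ _
      _ ≤ (Hbar*Fbar + Fbar^2) * (S * (3*Fbar)) := by
          apply mul_le_mul ha hb (abs_nonneg _); positivity
  have ht1 : |(fhat*(hhat₁ - h') + h'*(fhat - f) - hhat*(fhat₁ - f') - f'*(hhat - h))/fhat^2|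
      ≤ ((2*Fbar + Hbar) * S) / ((c/2)^2) := by
    rw [abs_div, abs_of_pos (by positivity : (0:ℝ) < fhat^2)]
    exact div_le_div₀ (by positivity) hnum1 (by positivity) hfhsq
  have ht2 : |(h'*f - h*f') * ((f - fhat)*(f + fhat)) / (fhat^2 * f^2)|
      ≤ ((Hbar*Fbar + Fbar^2) * (S * (3*Fbar))) / ((c/2)^2 * c^2) := by
    rw [abs_div, abs_of_pos (by positivity : (0:ℝ) < fhat^2 * f^2)]
    exact div_le_div₀ (by positivity) hnum2 (by positivity)
      (mul_le_mul hfhsq hfsq (by positivity) (by positivity))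
  calc |(fhat*(hhat₁ - h') + h'*(fhat - f) - hhat*(fhat₁ - f') - f'*(hhat - h))/fhat^2
        + (h'*f - h*f') * ((f - fhat)*(f + fhat)) / (fhat^2 * f^2)|
      ≤ |(fhat*(hhat₁ - h') + h'*(fhat - f) - hhat*(fhat₁ - f') - f'*(hhat - h))/fhat^2|
        + |(h'*f - h*f') * ((f - fhat)*(f + fhat)) / (fhat^2 * f^2)| := abs_add_le _ _
    _ ≤ ((2*Fbar + Hbar) * S) / ((c/2)^2)
        + ((Hbar*Fbar + Fbar^2) * (S * (3*Fbar))) / ((c/2)^2 * c^2) := by linarith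
    _ = (12 * Fbar * (Hbar * Fbar + Fbar ^ 2) / c ^ 4 + 4 * (2 * Fbar + Hbar) / c ^ 2) * S := by
        field_simp
        ring
end
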